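/- arXiv:2402.13501 — 2 statements merged into one kernel-verified Lean document; each statement's English description precedes it below -/
import Mathlib

section
/- Let G be a Hermitian unitary, V = exp(-i(θ/2)G), and O₁, O₂ operators anticommuting with G. If θ ~ N(0, σ²), then E_θ[Tr[O₁ V ρ V†] Tr[O₂ V ρ V†]] = α Tr[O₁ρ] Tr[O₂ρ] + β Tr[iGO₁ρ] Tr[iGO₂ρ], where α = (1+e^{-2σ²})/2 and β = (1-e^{-2σ²})/2. -/
/-!
Since `G² = 1` and `O` anticommutes with `G`, the Heisenberg-picture rotation is
`V† O V = cos θ • O + sin θ • (i G O)`. Hence `Tr[O₁ V ρ V†] Tr[O₂ V ρ V†]` is a trigonometric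
polynomial `a + b cos 2θ + c sin 2θ` in `θ`, and for `θ ~ N(0, σ²)` the complex moment generating
function `E[exp(zθ)] = exp(σ² z² / 2)` gives `E[cos 2θ] = exp(-2σ²)` and `E[sin 2θ] = 0`.
-/

open Matrix MeasureTheory Real

/-- Gaussian density with mean `μ` and variance `σ²`. -/
noncomputable def gaussDensity (σ μ x : ℝ) : ℝ :=
  (1 / (Real.sqrt (2 * Real.pi) * σ)) * Real.exp (-(x - μ) ^ 2 / (2 * σ ^ 2))

/-- The rotation `V = exp(-i(θ/2)G) = cos(θ/2)·I - i sin(θ/2)·G` generated by a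
Hermitian unitary `G`. -/
noncomputable def rotGate {n : ℕ} (G : Matrix (Fin n) (Fin n) ℂ) (θ : ℝ) :
    Matrix (Fin n) (Fin n) ℂ :=
  (Complex.cos ((θ : ℂ) / 2)) • (1 : Matrix (Fin n) (Fin n) ℂ)
    - (Complex.I * Complex.sin ((θ : ℂ) / 2)) • G

open ProbabilityTheory
open Complex (I)
open scoped Complex

namespace ProbabilityTheory

variable {μ : ℝ} {v : NNReal}

lemma integrable_cexp_mul_mul_I_gaussianReal (t : ℂ) :
    Integrable (fun x : ℝ ↦ cexp (t * x * I)) (gaussianReal μ v) := by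
  simp_rw [mul_right_comm _ _ I]
  exact integrable_cexp_mul_of_re_mem_integrableExpSet (X := id) aemeasurable_id (by simp)

lemma integral_cexp_mul_mul_I_gaussianReal (t : ℂ) :
    ∫ x, cexp (t * x * I) ∂gaussianReal μ v = cexp (t * μ * I) * cexp (-(v * t ^ 2 / 2)) := by
  simp_rw [mul_right_comm _ _ I]
  refine (complexMGF_id_gaussianReal (t * I)).trans ?_
  rw [← Complex.exp_add]
  congr 1
  linear_combination (v * t ^ 2 / 2 : ℂ) * Complex.I_sq

lemma integrable_cos_mul_gaussianReal (t : ℂ) :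
    Integrable (fun x : ℝ ↦ Complex.cos (t * x)) (gaussianReal μ v) := by
  simp_rw [Complex.cos, ← neg_mul]
  exact ((integrable_cexp_mul_mul_I_gaussianReal t).add
    (integrable_cexp_mul_mul_I_gaussianReal (-t))).div_const 2

lemma integrable_sin_mul_gaussianReal (t : ℂ) :
    Integrable (fun x : ℝ ↦ Complex.sin (t * x)) (gaussianReal μ v) := by
  simp_rw [Complex.sin, ← neg_mul]
  exact (((integrable_cexp_mul_mul_I_gaussianReal (-t)).sub
    (integrable_cexp_mul_mul_I_gaussianReal t)).mul_const I).div_const 2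

lemma integral_cos_mul_gaussianReal (t : ℂ) :
    ∫ x, Complex.cos (t * x) ∂gaussianReal μ v
      = Complex.cos (t * μ) * cexp (-(v * t ^ 2 / 2)) := by
  simp_rw [Complex.cos, ← neg_mul]
  rw [integral_div, integral_add (integrable_cexp_mul_mul_I_gaussianReal _)
    (integrable_cexp_mul_mul_I_gaussianReal _), integral_cexp_mul_mul_I_gaussianReal,
    integral_cexp_mul_mul_I_gaussianReal, neg_sq]
  ring

lemma integral_sin_mul_gaussianReal (t : ℂ) :
    ∫ x, Complex.sin (t * x) ∂gaussianReal μ v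
      = Complex.sin (t * μ) * cexp (-(v * t ^ 2 / 2)) := by
  simp_rw [Complex.sin, ← neg_mul]
  rw [integral_div, integral_mul_const, integral_sub (integrable_cexp_mul_mul_I_gaussianReal _)
    (integrable_cexp_mul_mul_I_gaussianReal _), integral_cexp_mul_mul_I_gaussianReal,
    integral_cexp_mul_mul_I_gaussianReal, neg_sq]
  ring

end ProbabilityTheory

lemma gaussDensity_eq_gaussianPDFReal {σ : ℝ} (hσ : 0 ≤ σ) (μ x : ℝ) :
    gaussDensity σ μ x = gaussianPDFReal μ (σ.toNNReal ^ 2) x := by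
  rw [gaussDensity, gaussianPDFReal, NNReal.coe_pow, Real.coe_toNNReal σ hσ,
    Real.sqrt_mul' _ (sq_nonneg σ), Real.sqrt_sq hσ, one_div]

lemma integral_gaussDensity_mul {σ : ℝ} (hσ : 0 < σ) (μ : ℝ) (f : ℝ → ℂ) :
    ∫ x, (gaussDensity σ μ x : ℂ) * f x = ∫ x, f x ∂gaussianReal μ (σ.toNNReal ^ 2) := by
  rw [integral_gaussianReal_eq_integral_smul (by positivity)]
  simp_rw [gaussDensity_eq_gaussianPDFReal hσ.le, Complex.real_smul]

section RotGate

variable {n : ℕ} {G : Matrix (Fin n) (Fin n) ℂ}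

lemma conjTranspose_rotGate (hG : Gᴴ = G) (θ : ℝ) :
    (rotGate G θ)ᴴ = Complex.cos (θ / 2) • 1 + (I * Complex.sin (θ / 2)) • G := by
  have hcos : star (Complex.cos (θ / 2)) = Complex.cos (θ / 2) := by
    rw [← Complex.ofReal_ofNat, ← Complex.ofReal_div, ← Complex.ofReal_cos]
    exact Complex.conj_ofReal _
  have hsin : star (Complex.sin (θ / 2)) = Complex.sin (θ / 2) := by
    rw [← Complex.ofReal_ofNat, ← Complex.ofReal_div, ← Complex.ofReal_sin]
    exact Complex.conj_ofReal _
  simp [rotGate, conjTranspose_smul, hG, hcos, hsin, sub_eq_add_neg]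

lemma conjTranspose_rotGate_mul_mul_rotGate (hG : Gᴴ = G) (hGG : G * G = 1)
    {O : Matrix (Fin n) (Fin n) ℂ} (hOG : O * G + G * O = 0) (θ : ℝ) :
    (rotGate G θ)ᴴ * O * rotGate G θ = Complex.cos θ • O + Complex.sin θ • (I • (G * O)) := by
  have hGOG : G * O * G = -O := by
    rw [Matrix.mul_assoc, eq_neg_of_add_eq_zero_left hOG, Matrix.mul_neg, ← Matrix.mul_assoc,
      hGG, Matrix.one_mul]
  have hcos : Complex.cos θ = Complex.cos (θ / 2) ^ 2 - Complex.sin (θ / 2) ^ 2 := by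
    rw [← Complex.cos_two_mul', mul_div_cancel₀ _ two_ne_zero]
  have hsin : Complex.sin θ = 2 * Complex.sin (θ / 2) * Complex.cos (θ / 2) := by
    rw [← Complex.sin_two_mul, mul_div_cancel₀ _ two_ne_zero]
  rw [conjTranspose_rotGate hG, rotGate, hcos, hsin]
  simp only [Matrix.add_mul, Matrix.mul_sub, Matrix.smul_mul, Matrix.mul_smul, Matrix.one_mul,
    Matrix.mul_one, hGOG, eq_neg_of_add_eq_zero_left hOG, smul_smul, smul_neg]
  match_scalars
  · linear_combination Complex.sin (θ / 2) ^ 2 * Complex.I_sq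
  · ring

lemma trace_mul_rotGate_mul_mul_conjTranspose (hG : Gᴴ = G) (hGG : G * G = 1)
    {O : Matrix (Fin n) (Fin n) ℂ} (hOG : O * G + G * O = 0) (ρ : Matrix (Fin n) (Fin n) ℂ)
    (θ : ℝ) :
    (O * rotGate G θ * ρ * (rotGate G θ)ᴴ).trace
      = Complex.cos θ * (O * ρ).trace + Complex.sin θ * ((I • (G * O)) * ρ).trace := by
  rw [trace_mul_cycle, ← Matrix.mul_assoc, conjTranspose_rotGate_mul_mul_rotGate hG hGG hOG,
    Matrix.add_mul, trace_add, Matrix.smul_mul, Matrix.smul_mul, trace_smul, trace_smul,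
    smul_eq_mul, smul_eq_mul]

end RotGate

theorem gaussian_expectation_trace_product {n : ℕ} (σ : ℝ) (hσ : 0 < σ)
    (G O₁ O₂ ρ : Matrix (Fin n) (Fin n) ℂ)
    (hGherm : Gᴴ = G) (hGunit : G * G = 1)
    (hanti₁ : O₁ * G + G * O₁ = 0) (hanti₂ : O₂ * G + G * O₂ = 0) :
    ∫ θ : ℝ, (gaussDensity σ 0 θ : ℂ)
        * ((O₁ * rotGate G θ * ρ * (rotGate G θ)ᴴ).trace
            * (O₂ * rotGate G θ * ρ * (rotGate G θ)ᴴ).trace)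
      = ((1 + Real.exp (-2 * σ ^ 2)) / 2 : ℝ) * ((O₁ * ρ).trace * (O₂ * ρ).trace)
        + ((1 - Real.exp (-2 * σ ^ 2)) / 2 : ℝ)
            * (((Complex.I • (G * O₁)) * ρ).trace * ((Complex.I • (G * O₂)) * ρ).trace) := by
  set A₁ := (O₁ * ρ).trace
  set A₂ := (O₂ * ρ).trace
  set B₁ := ((I • (G * O₁)) * ρ).trace
  set B₂ := ((I • (G * O₂)) * ρ).trace
  have h_integrand (θ : ℝ) :
      (O₁ * rotGate G θ * ρ * (rotGate G θ)ᴴ).trace * (O₂ * rotGate G θ * ρ * (rotGate G θ)ᴴ).trace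
        = (A₁ * A₂ + B₁ * B₂) / 2 + (A₁ * A₂ - B₁ * B₂) / 2 * Complex.cos (2 * θ)
          + (A₁ * B₂ + B₁ * A₂) / 2 * Complex.sin (2 * θ) := by
    rw [trace_mul_rotGate_mul_mul_conjTranspose hGherm hGunit hanti₁,
      trace_mul_rotGate_mul_mul_conjTranspose hGherm hGunit hanti₂,
      Complex.cos_two_mul', Complex.sin_two_mul]
    linear_combination (A₁ * A₂ + B₁ * B₂) / 2 * Complex.sin_sq_add_cos_sq (θ : ℂ)
  simp_rw [integral_gaussDensity_mul hσ, h_integrand]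
  have h_cos := (integrable_cos_mul_gaussianReal (μ := 0) (v := σ.toNNReal ^ 2) 2).const_mul
    ((A₁ * A₂ - B₁ * B₂) / 2)
  have h_sin := (integrable_sin_mul_gaussianReal (μ := 0) (v := σ.toNNReal ^ 2) 2).const_mul
    ((A₁ * B₂ + B₁ * A₂) / 2)
  rw [integral_add ?_ h_sin, integral_add (integrable_const _) h_cos,
    integral_const, integral_const_mul, integral_const_mul, integral_cos_mul_gaussianReal,
    integral_sin_mul_gaussianReal, probReal_univ, one_smul, Complex.ofReal_zero, mul_zero,
    Complex.cos_zero, Complex.sin_zero]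
  · push_cast [Real.coe_toNNReal σ hσ.le]
    ring_nf
  · exact (integrable_const _).add h_cos
end

section
/- Let G be a Hermitian unitary, V = exp(-i(θ/2)G), Õ an operator commuting with G, and O an operator anticommuting with G. If θ has the two-component Gaussian mixture density ½N(x|-π/2,σ²)+½N(x|π/2,σ²), then E_θ[Tr[Õ V ρ V†] Tr[O V ρ V†]] = 0. -/
/-!
Since `V(θ)ᴴ = V(-θ)` and `V(a) V(b) = V(a + b)`, cyclicity of the trace gives
`Tr[Õ V ρ Vᴴ] = Tr[Õ ρ]` (as `Õ` commutes with `V`) and `Tr[O V ρ Vᴴ] = Tr[V(-θ)² O ρ]`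
(as `O V(θ) = V(-θ) O`), which is `cos θ Tr[O ρ] + sin θ Tr[i G O ρ]`. The expectation is thus a
combination of `∫ p cos` and `∫ p sin` for the mixture density `p`: the latter vanishes because
`p` is even, the former because each component centred at `±π/2` makes `cos` odd about its centre.
-/

open Matrix MeasureTheory Real

/-- Two-component Gaussian mixture centered at `±π/2`, each with variance `σ²`. -/
noncomputable def mixture2 (σ x : ℝ) : ℝ :=
  (1 / 2) * gaussDensity σ (-(Real.pi / 2)) x + (1 / 2) * gaussDensity σ (Real.pi / 2) x

section rotGate

variable {n : ℕ} {G A : Matrix (Fin n) (Fin n) ℂ}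

theorem rotGate_zero : rotGate G 0 = 1 := by
  simp [rotGate]

theorem rotGate_add (hG : G * G = 1) (a b : ℝ) :
    rotGate G (a + b) = rotGate G a * rotGate G b := by
  have hcos := Complex.cos_add (a / 2) (b / 2)
  have hsin := Complex.sin_add (a / 2) (b / 2)
  simp only [rotGate, Complex.ofReal_add, add_div, sub_mul, mul_sub, smul_mul_smul_comm,
    one_mul, mul_one, hG, hcos, hsin]
  match_scalars
  · linear_combination (-Complex.sin (a / 2) * Complex.sin (b / 2)) * Complex.I_sq
  · ring

theorem conjTranspose_rotGate_s13 (hG : Gᴴ = G) (θ : ℝ) : (rotGate G θ)ᴴ = rotGate G (-θ) := by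
  simp only [rotGate, conjTranspose_sub, conjTranspose_smul, conjTranspose_one, hG,
    Complex.star_def, map_mul, Complex.conj_I, ← Complex.cos_conj, ← Complex.sin_conj, map_div₀,
    Complex.conj_ofReal, map_ofNat, Complex.ofReal_neg, neg_div, Complex.cos_neg, Complex.sin_neg]
  module

theorem commute_rotGate (h : Commute A G) (θ : ℝ) :
    Commute A (rotGate G θ) :=
  ((Commute.one_right A).smul_right _).sub_right (h.smul_right _)

theorem mul_rotGate_of_anticommute (h : A * G + G * A = 0)
    (θ : ℝ) : A * rotGate G θ = rotGate G (-θ) * A := by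
  have hGA : G * A = -(A * G) := eq_neg_of_add_eq_zero_right h
  simp only [rotGate, sub_mul, mul_sub, Matrix.smul_mul, Matrix.mul_smul, one_mul, mul_one, hGA,
    Complex.ofReal_neg, neg_div, Complex.cos_neg, Complex.sin_neg]
  module

theorem rotGate_neg_two_mul (θ : ℝ) :
    rotGate G (-(2 * θ))
      = (cos θ : ℂ) • (1 : Matrix (Fin n) (Fin n) ℂ) + (Complex.I * sin θ) • G := by
  have hhalf : ((-(2 * θ) : ℝ) : ℂ) / 2 = -θ := by push_cast; ring
  rw [rotGate, hhalf, Complex.cos_neg, Complex.sin_neg, ← Complex.ofReal_cos, ← Complex.ofReal_sin]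
  module

theorem trace_rotGate_conj_of_commute (hGh : Gᴴ = G) (hG : G * G = 1) (h : Commute A G)
    (ρ : Matrix (Fin n) (Fin n) ℂ) (θ : ℝ) :
    (A * rotGate G θ * ρ * (rotGate G θ)ᴴ).trace = (A * ρ).trace := by
  rw [conjTranspose_rotGate_s13 hGh, (commute_rotGate h θ).eq, trace_mul_comm]
  simp only [← mul_assoc]
  rw [← rotGate_add hG, neg_add_cancel, rotGate_zero, one_mul]

theorem trace_rotGate_conj_of_anticommute (hGh : Gᴴ = G) (hG : G * G = 1)
    (h : A * G + G * A = 0) (ρ : Matrix (Fin n) (Fin n) ℂ) (θ : ℝ) :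
    (A * rotGate G θ * ρ * (rotGate G θ)ᴴ).trace
      = (cos θ : ℂ) * (A * ρ).trace + (sin θ : ℂ) * (Complex.I * (G * A * ρ).trace) := by
  rw [conjTranspose_rotGate_s13 hGh, mul_rotGate_of_anticommute h, trace_mul_comm]
  simp only [← mul_assoc]
  rw [← rotGate_add hG, show -θ + -θ = -(2 * θ) by ring, rotGate_neg_two_mul]
  simp only [add_mul, Matrix.smul_mul, one_mul, trace_add, trace_smul, smul_eq_mul, mul_assoc]
  ring

end rotGate

theorem MeasureTheory.integral_eq_zero_of_odd {G E : Type*} [MeasurableSpace G] [AddGroup G]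
    [MeasurableNeg G] [NormedAddCommGroup E] [NormedSpace ℝ E] (μ : Measure G) [μ.IsNegInvariant]
    {f : G → E} (hf : f.Odd) : ∫ x, f x ∂μ = 0 := by
  have h := integral_neg_eq_self f μ
  simp_rw [show ∀ x, f (-x) = -f x from hf, integral_neg] at h
  have := IsAddTorsionFree.of_isTorsionFree ℝ E
  exact neg_eq_self.mp h

theorem MeasureTheory.Integrable.mul_cos {f : ℝ → ℝ} (hf : Integrable f) :
    Integrable fun x ↦ f x * cos x :=
  hf.mul_bdd continuous_cos.aestronglyMeasurable
    (ae_of_all _ fun x ↦ by simpa using abs_cos_le_one x)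

theorem MeasureTheory.Integrable.mul_sin {f : ℝ → ℝ} (hf : Integrable f) :
    Integrable fun x ↦ f x * sin x :=
  hf.mul_bdd continuous_sin.aestronglyMeasurable
    (ae_of_all _ fun x ↦ by simpa using abs_sin_le_one x)

theorem integral_ofReal_mul_cos_add_sin {f : ℝ → ℝ} (hf : Integrable f) (a b : ℂ) :
    ∫ θ, (f θ : ℂ) * ((cos θ : ℂ) * a + (sin θ : ℂ) * b)
      = (∫ θ, f θ * cos θ) • a + (∫ θ, f θ * sin θ) • b := by
  have h : ∀ θ, (f θ : ℂ) * ((cos θ : ℂ) * a + (sin θ : ℂ) * b)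
      = (f θ * cos θ) • a + (f θ * sin θ) • b := by
    intro θ
    simp only [Complex.real_smul, Complex.ofReal_mul]
    ring
  simp_rw [h]
  rw [integral_add (hf.mul_cos.smul_const a) (hf.mul_sin.smul_const b),
    integral_smul_const, integral_smul_const]

theorem integrable_gaussDensity (σ μ : ℝ) : Integrable (gaussDensity σ μ) := by
  rcases eq_or_ne σ 0 with rfl | hσ
  · -- the prefactor `1 / (√(2π) * 0)` is `0`
    have h0 : gaussDensity 0 μ = 0 := funext fun x ↦ by simp [gaussDensity]
    rw [h0]
    exact integrable_zero _ _ _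
  have hb : 0 < 1 / (2 * σ ^ 2) := by positivity
  refine ((integrable_exp_neg_mul_sq hb).comp_sub_right μ |>.const_mul
    (1 / (√(2 * π) * σ))).congr (ae_of_all _ fun x ↦ ?_)
  simp only [gaussDensity]
  ring_nf

theorem integrable_mixture2 (σ : ℝ) : Integrable (mixture2 σ) :=
  ((integrable_gaussDensity σ _).const_mul _).add ((integrable_gaussDensity σ _).const_mul _)

theorem gaussDensity_neg (σ μ x : ℝ) : gaussDensity σ (-μ) (-x) = gaussDensity σ μ x := by
  simp only [gaussDensity]
  ring_nf

theorem gaussDensity_add_right (σ μ x : ℝ) : gaussDensity σ μ (x + μ) = gaussDensity σ 0 x := by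
  simp only [gaussDensity, add_sub_cancel_right, sub_zero]

theorem integral_gaussDensity_mul_cos_of_cos_eq_zero (σ : ℝ) {μ : ℝ} (hμ : cos μ = 0) :
    ∫ x, gaussDensity σ μ x * cos x = 0 := by
  rw [← integral_add_right_eq_self _ μ]
  refine integral_eq_zero_of_odd volume fun x ↦ ?_
  have heven : gaussDensity σ 0 (-x) = gaussDensity σ 0 x := by
    simpa using gaussDensity_neg σ 0 x
  simp only [gaussDensity_add_right, cos_add, hμ, heven, cos_neg, sin_neg]
  ring

theorem mixture2_neg (σ x : ℝ) : mixture2 σ (-x) = mixture2 σ x := by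
  have h := gaussDensity_neg σ (-(π / 2)) x
  rw [neg_neg] at h
  rw [mixture2, mixture2, h, gaussDensity_neg]
  ring

theorem integral_mixture2_mul_cos (σ : ℝ) : ∫ x, mixture2 σ x * cos x = 0 := by
  have hcos : cos (-(π / 2)) = 0 := by rw [cos_neg, cos_pi_div_two]
  simp only [mixture2, add_mul, mul_assoc]
  rw [integral_add ((integrable_gaussDensity σ _).mul_cos.const_mul _)
      ((integrable_gaussDensity σ _).mul_cos.const_mul _),
    integral_const_mul, integral_const_mul,
    integral_gaussDensity_mul_cos_of_cos_eq_zero σ hcos,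
    integral_gaussDensity_mul_cos_of_cos_eq_zero σ cos_pi_div_two]
  simp

theorem integral_mixture2_mul_sin (σ : ℝ) : ∫ x, mixture2 σ x * sin x = 0 :=
  integral_eq_zero_of_odd volume fun x ↦ by rw [mixture2_neg, sin_neg, mul_neg]

theorem mixture2_expectation_trace_cross_general {n : ℕ} (σ : ℝ)
    (G Otil O ρ : Matrix (Fin n) (Fin n) ℂ)
    (hGherm : Gᴴ = G) (hGunit : G * G = 1)
    (hcomm : Otil * G = G * Otil) (hanti : O * G + G * O = 0) :
    ∫ θ : ℝ, (mixture2 σ θ : ℂ)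
        * ((Otil * rotGate G θ * ρ * (rotGate G θ)ᴴ).trace
            * (O * rotGate G θ * ρ * (rotGate G θ)ᴴ).trace)
      = 0 := by
  have hproduct : ∀ θ : ℝ, (Otil * rotGate G θ * ρ * (rotGate G θ)ᴴ).trace
        * (O * rotGate G θ * ρ * (rotGate G θ)ᴴ).trace
      = (cos θ : ℂ) * ((Otil * ρ).trace * (O * ρ).trace)
        + (sin θ : ℂ) * ((Otil * ρ).trace * (Complex.I * (G * O * ρ).trace)) := by
    intro θ
    rw [trace_rotGate_conj_of_commute hGherm hGunit hcomm,
      trace_rotGate_conj_of_anticommute hGherm hGunit hanti]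
    ring
  simp_rw [hproduct]
  rw [integral_ofReal_mul_cos_add_sin (integrable_mixture2 σ), integral_mixture2_mul_cos,
    integral_mixture2_mul_sin, zero_smul, zero_smul, add_zero]

theorem mixture2_expectation_trace_cross {n : ℕ} (σ : ℝ) (hσ : 0 < σ)
    (G Otil O ρ : Matrix (Fin n) (Fin n) ℂ)
    (hGherm : Gᴴ = G) (hGunit : G * G = 1)
    (hcomm : Otil * G = G * Otil) (hanti : O * G + G * O = 0) :
    ∫ θ : ℝ, (mixture2 σ θ : ℂ)
        * ((Otil * rotGate G θ * ρ * (rotGate G θ)ᴴ).trace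
            * (O * rotGate G θ * ρ * (rotGate G θ)ᴴ).trace)
      = 0 :=
  mixture2_expectation_trace_cross_general σ G Otil O ρ hGherm hGunit hcomm hanti
end
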